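/- arXiv:1209.1122 — 4 statements merged into one kernel-verified Lean document; each statement's English description precedes it below -/
import Mathlib

section
/- Let 0 < p₀ < p̄ < p₁ < 1 with p̄ = (p₀+p₁)/2, and for large m define k_m = ⌈log_{1/p̄}(log m)⌉. Then ∑_{m} p₁^{k_m} / m = ∞ while ∑_{m} p₀^{k_m} / m < ∞. -/
open Real

private lemma rpow_logb_eq (p b y : ℝ) (hp : 0 < p) (hy : 0 < y) :
    p ^ (Real.logb b y) = y ^ (Real.log p / Real.log b) := by
  rw [Real.rpow_def_of_pos hp, Real.rpow_def_of_pos hy, Real.logb]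
  congr 1
  ring

/-- Key equivalence: summability of `∑ p^{k m}/m` is equivalent to summability of
`∑ n^{log p / log (1/pbar)}`. -/
private lemma key (pbar p : ℝ) (hpb : 0 < pbar) (hpb1 : pbar < 1) (hp : 0 < p) (hp1 : p < 1)
    (k : ℕ → ℕ)
    (hk : ∀ m : ℕ, 1 / pbar < Real.log m → (k m : ℤ) = ⌈Real.logb (1 / pbar) (Real.log m)⌉)
    (hk' : ∀ m : ℕ, ¬ (1 / pbar < Real.log m) → k m = 1) :
    Summable (fun m : ℕ => p ^ k m / m) ↔
      Summable (fun n : ℕ => (n : ℝ) ^ (Real.log p / Real.log (1 / pbar))) := by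
  set b : ℝ := 1 / pbar with hbdef
  have hb : 1 < b := by
    rw [hbdef, lt_div_iff₀ hpb]; linarith
  have hlogb : 0 < Real.log b := Real.log_pos hb
  set s : ℝ := Real.log p / Real.log b with hsdef
  -- monotonicity of k
  have kmono : ∀ m n : ℕ, 0 < m → m ≤ n → k m ≤ k n := by
    intro m n hm hmn
    have hmpos : (0:ℝ) < (m:ℝ) := by exact_mod_cast hm
    have hlogmn : Real.log m ≤ Real.log n :=
      Real.log_le_log hmpos (by exact_mod_cast hmn)
    by_cases hc : b < Real.log m
    · have hcn : b < Real.log n := lt_of_lt_of_le hc hlogmn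
      have h1 : (k m : ℤ) ≤ (k n : ℤ) := by
        rw [hk m hc, hk n hcn]
        exact Int.ceil_le_ceil
          ((Real.logb_le_logb hb (by linarith) (by linarith)).2 hlogmn)
      exact_mod_cast h1
    · rw [hk' m hc]
      by_cases hcn : b < Real.log n
      · have h1 : (1:ℤ) ≤ (k n : ℤ) := by
          rw [hk n hcn]
          exact Int.one_le_ceil_iff.2 (Real.logb_pos hb (by linarith))
        exact_mod_cast h1
      · rw [hk' n hcn]
  -- condensation
  have hnonneg : ∀ m : ℕ, 0 ≤ p ^ k m / (m:ℝ) := fun m => by positivity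
  have hmono : ∀ ⦃m n : ℕ⦄, 0 < m → m ≤ n → p ^ k n / (n:ℝ) ≤ p ^ k m / (m:ℝ) := by
    intro m n hm hmn
    have hmpos : (0:ℝ) < (m:ℝ) := by exact_mod_cast hm
    exact div_le_div₀ (by positivity)
      (pow_le_pow_of_le_one hp.le hp1.le (kmono m n hm hmn)) hmpos (by exact_mod_cast hmn)
  have hcond := summable_condensed_iff_of_nonneg hnonneg hmono
  have hterm : ∀ n : ℕ, (2:ℝ) ^ n * (p ^ k (2 ^ n) / ((2 ^ n : ℕ):ℝ)) = p ^ k (2 ^ n) := by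
    intro n
    rw [Nat.cast_pow, Nat.cast_ofNat, mul_comm, div_mul_cancel₀]
    positivity
  have hcond' : Summable (fun n : ℕ => p ^ k (2 ^ n)) ↔
      Summable (fun m : ℕ => p ^ k m / (m:ℝ)) := by
    rw [← hcond]
    exact summable_congr fun n => (hterm n).symm
  -- choose N
  have hlog2 : (0:ℝ) < Real.log 2 := Real.log_pos one_lt_two
  obtain ⟨N, hN⟩ := exists_nat_gt (b / Real.log 2)
  have hNb : ∀ n : ℕ, N ≤ n → b < (n:ℝ) * Real.log 2 := by
    intro n hn
    have : b / Real.log 2 < (n:ℝ) := lt_of_lt_of_le hN (by exact_mod_cast hn)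
    calc b = b / Real.log 2 * Real.log 2 := by field_simp
    _ < (n:ℝ) * Real.log 2 := by exact mul_lt_mul_of_pos_right this hlog2
  have hlogpow : ∀ n : ℕ, Real.log ((2 ^ n : ℕ):ℝ) = (n:ℝ) * Real.log 2 := by
    intro n
    rw [Nat.cast_pow, Nat.cast_ofNat, Real.log_pow]
  -- bounds for n ≥ N
  have hbnds : ∀ n : ℕ, N ≤ n →
      p * (((n:ℝ) * Real.log 2) ^ s) ≤ p ^ k (2 ^ n) ∧
        p ^ k (2 ^ n) ≤ ((n:ℝ) * Real.log 2) ^ s := by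
    intro n hn
    set y : ℝ := (n:ℝ) * Real.log 2 with hydef
    have hyb : b < y := hNb n hn
    have hy0 : 0 < y := lt_trans (by linarith) hyb
    have hcondm : b < Real.log ((2 ^ n : ℕ):ℝ) := by rw [hlogpow n]; exact hyb
    have hkeq : (k (2 ^ n) : ℤ) = ⌈Real.logb b y⌉ := by
      rw [hk (2 ^ n) hcondm, hlogpow n]
    have hle1 : Real.logb b y ≤ ((k (2 ^ n) : ℕ) : ℝ) := by
      have h := Int.le_ceil (Real.logb b y)
      rw [← hkeq] at h
      exact_mod_cast h
    have hle2 : ((k (2 ^ n) : ℕ) : ℝ) ≤ Real.logb b y + 1 := by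
      have h := (Int.ceil_lt_add_one (Real.logb b y)).le
      rw [← hkeq] at h
      exact_mod_cast h
    have hps : p ^ Real.logb b y = y ^ s := rpow_logb_eq p b y hp hy0
    constructor
    · have h2 : p ^ (Real.logb b y + 1) ≤ p ^ (((k (2 ^ n) : ℕ) : ℝ)) :=
        Real.rpow_le_rpow_of_exponent_ge hp hp1.le hle2
      rw [Real.rpow_add_one hp.ne' , hps, Real.rpow_natCast] at h2
      linarith [h2, mul_comm p (y ^ s)]
    · have h2 : p ^ (((k (2 ^ n) : ℕ) : ℝ)) ≤ p ^ Real.logb b y :=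
        Real.rpow_le_rpow_of_exponent_ge hp hp1.le hle1
      rw [hps, Real.rpow_natCast] at h2
      exact h2
  have hNpos : (0:ℝ) < (N:ℝ) := by
    have : (0:ℝ) < b / Real.log 2 := by positivity
    exact_mod_cast lt_of_lt_of_le (by exact_mod_cast this.trans hN : (0:ℝ) < (N:ℝ)) le_rfl
  -- split rpow of product
  have hsplit : ∀ n : ℕ, (((n + N : ℕ):ℝ) * Real.log 2) ^ s
      = ((n + N : ℕ):ℝ) ^ s * (Real.log 2) ^ s := fun n =>
    Real.mul_rpow (by positivity) hlog2.le
  constructor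
  · -- Summable f → Summable F
    intro hf
    have hg : Summable (fun n : ℕ => p ^ k (2 ^ n)) := hcond'.2 hf
    have hg' : Summable (fun n : ℕ => p ^ k (2 ^ (n + N))) :=
      (summable_nat_add_iff N).2 hg
    have hcomp : Summable (fun n : ℕ => p * (Real.log 2) ^ s * ((n + N : ℕ):ℝ) ^ s) := by
      apply Summable.of_nonneg_of_le (fun n => by positivity) _ hg'
      intro n
      have h := (hbnds (n + N) (Nat.le_add_left N n)).1
      calc p * (Real.log 2) ^ s * ((n + N : ℕ):ℝ) ^ s
          = p * ((((n + N : ℕ):ℝ) * Real.log 2) ^ s) := by rw [hsplit n]; ring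
        _ ≤ p ^ k (2 ^ (n + N)) := h
    have hc0 : p * (Real.log 2) ^ s ≠ 0 := by positivity
    have hF' : Summable (fun n : ℕ => ((n + N : ℕ):ℝ) ^ s) :=
      (summable_mul_left_iff hc0).1 hcomp
    exact (summable_nat_add_iff N).1 hF'
  · -- Summable F → Summable f
    intro hF
    have hF' : Summable (fun n : ℕ => ((n + N : ℕ):ℝ) ^ s * (Real.log 2) ^ s) :=
      ((summable_nat_add_iff N).2 hF).mul_right _
    have hg' : Summable (fun n : ℕ => p ^ k (2 ^ (n + N))) := by
      apply Summable.of_nonneg_of_le (fun n => by positivity) _ hF'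
      intro n
      have h := (hbnds (n + N) (Nat.le_add_left N n)).2
      rw [hsplit n] at h
      exact h
    exact hcond'.1 ((summable_nat_add_iff N).1 hg')

/-- With `0 < p₀ < p̄ < p₁ < 1`, `p̄ = (p₀+p₁)/2`, and `k_m = ⌈log_{1/p̄}(log m)⌉` for large `m`
(`k_m = 1` for small `m`), the series `∑ p₁^{k_m}/m` diverges while `∑ p₀^{k_m}/m` converges. -/
theorem stmt_2 (p₀ p₁ pbar : ℝ) (h0 : 0 < p₀) (h01 : p₀ < p₁) (h1 : p₁ < 1)
    (hbar : pbar = (p₀ + p₁) / 2)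
    (k : ℕ → ℕ)
    (hk : ∀ m : ℕ, 1 / pbar < Real.log m → (k m : ℤ) = ⌈Real.logb (1 / pbar) (Real.log m)⌉)
    (hk' : ∀ m : ℕ, ¬ (1 / pbar < Real.log m) → k m = 1) :
    ¬ Summable (fun m : ℕ => p₁ ^ k m / m) ∧ Summable (fun m : ℕ => p₀ ^ k m / m) := by
  have hp1 : 0 < p₁ := h0.trans h01
  have hpb : 0 < pbar := by rw [hbar]; linarith
  have hpb1 : pbar < 1 := by rw [hbar]; linarith
  have h0b : p₀ < pbar := by rw [hbar]; linarith
  have hb1 : pbar < p₁ := by rw [hbar]; linarith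
  have hb : 1 < 1 / pbar := by rw [lt_div_iff₀ hpb]; linarith
  have hlogb : 0 < Real.log (1 / pbar) := Real.log_pos hb
  have hlogbar : Real.log (1 / pbar) = - Real.log pbar := by
    rw [one_div, Real.log_inv]
  constructor
  · intro hsum
    have hF := (key pbar p₁ hpb hpb1 hp1 h1 k hk hk').1 hsum
    have hs1 : Real.log p₁ / Real.log (1 / pbar) < -1 := Real.summable_nat_rpow.1 hF
    rw [div_lt_iff₀ hlogb] at hs1
    have hlt : Real.log pbar < Real.log p₁ := Real.log_lt_log hpb hb1
    rw [hlogbar] at hs1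
    linarith
  · apply (key pbar p₀ hpb hpb1 h0 (lt_trans h01 h1) k hk hk').2
    apply Real.summable_nat_rpow.2
    rw [div_lt_iff₀ hlogb]
    have hlt : Real.log p₀ < Real.log pbar := Real.log_lt_log h0 h0b
    rw [hlogbar]
    linarith
end

section
/- Consider two time-inhomogeneous two-state Markov chains on state space {0,1} with transition probabilities a_n^{ij} (under measure P⁰) and ā_n^{ij} (under measure P¹), satisfying m · ā_n^{ij} < a_n^{ij} < M · ā_n^{ij} for all n and i,j, where 0 < m ≤ M < ∞. Suppose additionally that (i) lim_n P⁰(x_n = 0) = 1 and lim_n P¹(x_n = 1) = 1 (learning in probability), (ii) ∑_n a_n^{01} = ∞ and ∑_n a_n^{10} = ∞, and (iii) lim_n a_n^{01} = 0. Then liminf_{n→∞} [ (1/2) P⁰(x_n ≠ 0) + (1/2) P¹(x_n ≠ 1) ] ≥ (1/2) · min{ (1/6)(1 - e^{-1/(2M)}), (1/4)(1 - e^{-m/2}) } > 0, yielding a contradiction; hence assumptions (i)–(iii) are jointly inconsistent. -/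
open MeasureTheory Filter

lemma aux_ms {Ω : Type*} [MeasurableSpace Ω] (x : ℕ → Ω → Bool)
    (hx : ∀ n, Measurable (x n)) (n : ℕ) (i : Bool) :
    MeasurableSet {ω | x n ω = i} := (hx n) (measurableSet_singleton i)

/-- splitting a measure along the two values of `x n`. -/
lemma aux_split {Ω : Type*} [MeasurableSpace Ω] (P : Measure Ω)
    (x : ℕ → Ω → Bool) (hx : ∀ n, Measurable (x n)) (n : ℕ)
    {T : Set Ω} (hT : MeasurableSet T) :
    P ({ω | x n ω = false} ∩ T) + P ({ω | x n ω = true} ∩ T) = P T := by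
  rw [← measure_union]
  · congr 1
    ext ω
    simp only [Set.mem_union, Set.mem_inter_iff, Set.mem_setOf_eq]
    cases h : x n ω <;> simp [h]
  · apply Set.disjoint_left.2
    rintro ω ⟨h1, -⟩ ⟨h2, -⟩
    simp only [Set.mem_setOf_eq] at h1 h2
    rw [h1] at h2; exact Bool.false_ne_true h2
  · exact (aux_ms x hx n true).inter hT

/-- product of the conditioning probability with the conditional probability. -/
lemma aux_mul_cond {Ω : Type*} [MeasurableSpace Ω] (P : Measure Ω) [IsProbabilityMeasure P]
    {A T : Set Ω} (hA : MeasurableSet A) (hApos : P A ≠ 0) :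
    (P A).toReal * (ProbabilityTheory.cond P A T).toReal = (P (A ∩ T)).toReal := by
  rw [ProbabilityTheory.cond_apply hA P T, ENNReal.toReal_mul, ENNReal.toReal_inv]
  rw [← mul_assoc, mul_inv_cancel₀, one_mul]
  exact ENNReal.toReal_ne_zero.2 ⟨hApos, measure_ne_top P A⟩

/-- law of total probability for a two-state process. -/
lemma aux_total {Ω : Type*} [MeasurableSpace Ω] (P : Measure Ω) [IsProbabilityMeasure P]
    (x : ℕ → Ω → Bool) (hx : ∀ n, Measurable (x n))
    (hpos : ∀ n i, 0 < P {ω | x n ω = i}) (n : ℕ) (j : Bool) :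
    (P {ω | x (n + 1) ω = j}).toReal =
      (P {ω | x n ω = false}).toReal *
        (ProbabilityTheory.cond P {ω | x n ω = false} {ω | x (n + 1) ω = j}).toReal +
      (P {ω | x n ω = true}).toReal *
        (ProbabilityTheory.cond P {ω | x n ω = true} {ω | x (n + 1) ω = j}).toReal := by
  rw [aux_mul_cond P (aux_ms x hx n false) (hpos n false).ne',
      aux_mul_cond P (aux_ms x hx n true) (hpos n true).ne']
  rw [← ENNReal.toReal_add (measure_ne_top _ _) (measure_ne_top _ _),
      aux_split P x hx n (aux_ms x hx (n + 1) j)]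

/-- row sums of the conditional transition probabilities are 1. -/
lemma aux_row {Ω : Type*} [MeasurableSpace Ω] (P : Measure Ω) [IsProbabilityMeasure P]
    (x : ℕ → Ω → Bool) (hx : ∀ n, Measurable (x n))
    (hpos : ∀ n i, 0 < P {ω | x n ω = i}) (n : ℕ) (i : Bool) :
    (ProbabilityTheory.cond P {ω | x n ω = i} {ω | x (n + 1) ω = true}).toReal +
      (ProbabilityTheory.cond P {ω | x n ω = i} {ω | x (n + 1) ω = false}).toReal = 1 := by
  have hA := aux_ms x hx n i
  have hApos := (hpos n i).ne'
  have hne : (P {ω | x n ω = i}).toReal ≠ 0 :=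
    ENNReal.toReal_ne_zero.2 ⟨hApos, measure_ne_top _ _⟩
  have key : (P {ω | x n ω = i}).toReal *
      ((ProbabilityTheory.cond P {ω | x n ω = i} {ω | x (n + 1) ω = true}).toReal +
       (ProbabilityTheory.cond P {ω | x n ω = i} {ω | x (n + 1) ω = false}).toReal) =
      (P {ω | x n ω = i}).toReal * 1 := by
    rw [mul_add, aux_mul_cond P hA hApos, aux_mul_cond P hA hApos, mul_one,
        ← ENNReal.toReal_add (measure_ne_top _ _) (measure_ne_top _ _)]
    congr 1
    rw [← measure_union]
    · congr 1
      ext ω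
      simp only [Set.mem_union, Set.mem_inter_iff, Set.mem_setOf_eq]
      cases h : x (n + 1) ω <;> simp [h]
    · apply Set.disjoint_left.2
      rintro ω ⟨-, h1⟩ ⟨-, h2⟩
      simp only [Set.mem_setOf_eq] at h1 h2
      rw [h1] at h2; simp at h2
    · exact hA.inter (aux_ms x hx (n + 1) false)
  exact mul_left_cancel₀ hne key

/-- complement relation for the two states. -/
lemma aux_compl {Ω : Type*} [MeasurableSpace Ω] (P : Measure Ω) [IsProbabilityMeasure P]
    (x : ℕ → Ω → Bool) (hx : ∀ n, Measurable (x n)) (n : ℕ) :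
    (P {ω | x n ω = true}).toReal = 1 - (P {ω | x n ω = false}).toReal := by
  have h : {ω | x n ω = true} = {ω | x n ω = false}ᶜ := by
    ext ω
    simp only [Set.mem_setOf_eq, Set.mem_compl_iff]
    cases h : x n ω <;> simp
  rw [h, prob_compl_eq_one_sub (aux_ms x hx n false), ENNReal.toReal_sub_of_le
    prob_le_one (by simp), ENNReal.toReal_one]

/-- Core real analysis lemma: the telescoping identities for the two chains together with the
likelihood-ratio bounds force summability of `α`. -/
lemma aux_core (q p α β αb βb : ℕ → ℝ) (m M : ℝ) (hm : 0 < m) (hmM : m ≤ M)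
    (hq : ∀ n, 0 ≤ q n ∧ q n ≤ 1) (hp : ∀ n, 0 ≤ p n ∧ p n ≤ 1)
    (hα : ∀ n, 0 ≤ α n) (hβ : ∀ n, 0 ≤ β n) (hαb : ∀ n, 0 ≤ αb n) (hβb : ∀ n, 0 ≤ βb n)
    (h1 : ∀ n, m * αb n ≤ α n) (h2 : ∀ n, β n ≤ M * βb n)
    (hE0 : ∀ n, q (n + 1) - q n = (1 - q n) * α n - q n * β n)
    (hE1 : ∀ n, p (n + 1) - p n = (1 - p n) * βb n - p n * αb n)
    (hq0 : Tendsto q atTop (nhds 0)) (hp0 : Tendsto p atTop (nhds 0)) :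
    Summable α := by
  have hM : 0 < M := lt_of_lt_of_le hm hmM
  -- threshold
  have hev : ∀ᶠ n in atTop, q n < 1 / 2 ∧ p n < m / (8 * M) :=
    (hq0.eventually_lt_const (by norm_num)).and (hp0.eventually_lt_const (by positivity))
  obtain ⟨N0, hN0⟩ := eventually_atTop.1 hev
  -- bound partial tail sums of α
  have key : ∀ K : ℕ, ∑ k ∈ Finset.range K, α (N0 + k) ≤ 4 + 8 * M := by
    intro K
    have hsmall : ∀ k, q (N0 + k) < 1 / 2 ∧ p (N0 + k) < m / (8 * M) :=
      fun k => hN0 (N0 + k) (Nat.le_add_right _ _)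
    -- telescoping for q
    have t0 : ∑ k ∈ Finset.range K, ((1 - q (N0 + k)) * α (N0 + k) - q (N0 + k) * β (N0 + k))
        = q (N0 + K) - q N0 := by
      have h := Finset.sum_range_sub (fun k => q (N0 + k)) K
      simp only [Nat.add_zero] at h
      rw [← h]
      exact Finset.sum_congr rfl fun k _ => (hE0 (N0 + k)).symm
    have t1 : ∑ k ∈ Finset.range K, ((1 - p (N0 + k)) * βb (N0 + k) - p (N0 + k) * αb (N0 + k))
        = p (N0 + K) - p N0 := by
      have h := Finset.sum_range_sub (fun k => p (N0 + k)) K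
      simp only [Nat.add_zero] at h
      rw [← h]
      exact Finset.sum_congr rfl fun k _ => (hE1 (N0 + k)).symm
    rw [Finset.sum_sub_distrib] at t0 t1
    -- sums
    set A := ∑ k ∈ Finset.range K, α (N0 + k) with hA
    set B := ∑ k ∈ Finset.range K, β (N0 + k) with hB
    -- q-side bounds
    have hb2 : (1 / 2) * A ≤ ∑ k ∈ Finset.range K, (1 - q (N0 + k)) * α (N0 + k) := by
      rw [hA, Finset.mul_sum]
      refine Finset.sum_le_sum fun k _ => ?_
      exact mul_le_mul_of_nonneg_right (by linarith [(hsmall k).1]) (hα _)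
    have hqβ : ∑ k ∈ Finset.range K, q (N0 + k) * β (N0 + k) ≤ B := by
      rw [hB]
      refine Finset.sum_le_sum fun k _ => ?_
      nlinarith [(hq (N0 + k)).1, (hq (N0 + k)).2, hβ (N0 + k)]
    have hAB : A ≤ 2 + 2 * B := by
      have h01 := (hq (N0 + K)).2
      have h02 := (hq N0).1
      linarith
    -- p-side bounds
    have hb4 : B ≤ 2 * M * ∑ k ∈ Finset.range K, (1 - p (N0 + k)) * βb (N0 + k) := by
      rw [hB, Finset.mul_sum]
      refine Finset.sum_le_sum fun k _ => ?_
      have hphalf : p (N0 + k) ≤ 1 / 2 := by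
        have := (hsmall k).2
        have : m / (8 * M) ≤ 1 / 8 := by
          rw [div_le_div_iff₀ (by positivity) (by norm_num)]
          linarith
        linarith [(hsmall k).2]
      have hb0 := hβb (N0 + k)
      have h2' := h2 (N0 + k)
      nlinarith [mul_nonneg hM.le (mul_nonneg (show (0:ℝ) ≤ 1 - p (N0 + k) - 1 / 2 by linarith) hb0)]
    have hpα : ∑ k ∈ Finset.range K, p (N0 + k) * αb (N0 + k) ≤ A / (8 * M) := by
      rw [hA, Finset.sum_div]
      refine Finset.sum_le_sum fun k _ => ?_
      have hle : p (N0 + k) * αb (N0 + k) ≤ (m / (8 * M)) * αb (N0 + k) :=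
        mul_le_mul_of_nonneg_right (hsmall k).2.le (hαb _)
      have hle2 : (m * αb (N0 + k)) / (8 * M) ≤ α (N0 + k) / (8 * M) :=
        (div_le_div_iff_of_pos_right (by positivity)).2 (h1 _)
      calc p (N0 + k) * αb (N0 + k) ≤ (m / (8 * M)) * αb (N0 + k) := hle
        _ = (m * αb (N0 + k)) / (8 * M) := by ring
        _ ≤ α (N0 + k) / (8 * M) := hle2
    -- combine
    have ht1b : ∑ k ∈ Finset.range K, (1 - p (N0 + k)) * βb (N0 + k) ≤ 1 + A / (8 * M) := by
      have h01 := (hp (N0 + K)).2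
      have h02 := (hp N0).1
      linarith
    have hBA : B ≤ 2 * M * (1 + A / (8 * M)) :=
      hb4.trans (mul_le_mul_of_nonneg_left ht1b (by positivity))
    have hBA' : B ≤ 2 * M + A / 4 := by
      have heq : 2 * M * (1 + A / (8 * M)) = 2 * M + A / 4 := by
        field_simp
        ring
      linarith [hBA, heq ▸ hBA]
    linarith
  exact (summable_nat_add_iff N0).1 (by
    have := summable_of_sum_range_le (fun k => hα (N0 + k)) key
    simpa [add_comm] using this)

/-- For two coupled time-inhomogeneous two-state Markov chains (under `P⁰` and `P¹`) whose
transition probabilities satisfy `m·āₙ^{ij} < aₙ^{ij} < M·āₙ^{ij}`, the assumptions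
(i) learning in probability, (ii) `∑ aₙ^{01} = ∞` and `∑ aₙ^{10} = ∞`, and
(iii) `aₙ^{01} → 0` are jointly inconsistent. -/
theorem stmt_11 {Ω : Type*} [MeasurableSpace Ω] (P0 P1 : Measure Ω)
    [IsProbabilityMeasure P0] [IsProbabilityMeasure P1]
    (x : ℕ → Ω → Bool) (hx : ∀ n, Measurable (x n))
    (m M : ℝ) (hm : 0 < m) (hmM : m ≤ M)
    (hpos0 : ∀ n i, 0 < P0 {ω | x n ω = i}) (hpos1 : ∀ n i, 0 < P1 {ω | x n ω = i})
    -- Markov property under each measure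
    (hmarkov0 : ∀ (n : ℕ) (v : ℕ → Bool) (j : Bool),
      0 < P0 {ω | ∀ k ≤ n, x k ω = v k} →
      ProbabilityTheory.cond P0 {ω | ∀ k ≤ n, x k ω = v k} {ω | x (n + 1) ω = j}
        = ProbabilityTheory.cond P0 {ω | x n ω = v n} {ω | x (n + 1) ω = j})
    (hmarkov1 : ∀ (n : ℕ) (v : ℕ → Bool) (j : Bool),
      0 < P1 {ω | ∀ k ≤ n, x k ω = v k} →
      ProbabilityTheory.cond P1 {ω | ∀ k ≤ n, x k ω = v k} {ω | x (n + 1) ω = j}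
        = ProbabilityTheory.cond P1 {ω | x n ω = v n} {ω | x (n + 1) ω = j})
    -- transition probabilities
    (a abar : ℕ → Bool → Bool → ℝ)
    (ha : ∀ n i j, a n i j =
      (ProbabilityTheory.cond P0 {ω | x n ω = i} {ω | x (n + 1) ω = j}).toReal)
    (habar : ∀ n i j, abar n i j =
      (ProbabilityTheory.cond P1 {ω | x n ω = i} {ω | x (n + 1) ω = j}).toReal)
    -- bounded likelihood ratio coupling
    (hblr : ∀ n i j, m * abar n i j < a n i j ∧ a n i j < M * abar n i j)
    -- (i) learning in probability
    (hlearn0 : Tendsto (fun n => (P0 {ω | x n ω = false}).toReal) atTop (nhds 1))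
    (hlearn1 : Tendsto (fun n => (P1 {ω | x n ω = true}).toReal) atTop (nhds 1))
    -- (ii) divergent switching sums
    (hsum01 : ¬ Summable (fun n => a n false true))
    (hsum10 : ¬ Summable (fun n => a n true false))
    -- (iii) vanishing switching probability
    (hlim : Tendsto (fun n => a n false true) atTop (nhds 0)) :
    False := by
  apply hsum01
  have hle1 : ∀ (P : Measure Ω) [IsProbabilityMeasure P] (s : Set Ω), (P s).toReal ≤ 1 := by
    intro P _ s
    simpa using ENNReal.toReal_mono ENNReal.one_ne_top (prob_le_one (μ := P) (s := s))
  refine aux_core (fun n => (P0 {ω | x n ω = true}).toReal)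
    (fun n => (P1 {ω | x n ω = false}).toReal)
    (fun n => a n false true) (fun n => a n true false)
    (fun n => abar n false true) (fun n => abar n true false) m M hm hmM
    (fun n => ⟨ENNReal.toReal_nonneg, hle1 P0 _⟩)
    (fun n => ⟨ENNReal.toReal_nonneg, hle1 P1 _⟩)
    (fun n => by simp only [ha]; exact ENNReal.toReal_nonneg)
    (fun n => by simp only [ha]; exact ENNReal.toReal_nonneg)
    (fun n => by simp only [habar]; exact ENNReal.toReal_nonneg)
    (fun n => by simp only [habar]; exact ENNReal.toReal_nonneg)
    (fun n => (hblr n false true).1.le) (fun n => (hblr n true false).2.le)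
    ?_ ?_ ?_ ?_
  · -- hE0
    intro n
    have ht := aux_total P0 x hx hpos0 n true
    have hr := aux_row P0 x hx hpos0 n true
    have hc := aux_compl P0 x hx n
    rw [← ha n false true, ← ha n true true] at ht
    rw [← ha n true true, ← ha n true false] at hr
    linear_combination ht + a n false true * hc + (P0 {ω | x n ω = true}).toReal * hr
  · -- hE1
    intro n
    have ht1 := aux_total P1 x hx hpos1 n false
    have hr1 := aux_row P1 x hx hpos1 n false
    have hc1 := aux_compl P1 x hx n
    rw [← habar n false false, ← habar n true false] at ht1
    rw [← habar n false true, ← habar n false false] at hr1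
    linear_combination ht1 + abar n true false * hc1 + (P1 {ω | x n ω = false}).toReal * hr1
  · -- hq0
    have he : (fun n => (P0 {ω | x n ω = true}).toReal)
        = fun n => 1 - (P0 {ω | x n ω = false}).toReal :=
      funext fun n => aux_compl P0 x hx n
    rw [he]
    simpa using hlearn0.const_sub 1
  · -- hp0
    have he : (fun n => (P1 {ω | x n ω = false}).toReal)
        = fun n => 1 - (P1 {ω | x n ω = true}).toReal := by
      funext n
      have := aux_compl P1 x hx n
      linarith
    rw [he]
    simpa using hlearn1.const_sub 1
end

section
/- Let {w_i} be a {0,1}-valued time-inhomogeneous Markov chain with w_1 = 0, and transition probabilities p_i^{01} = P(w_{i+1} = 1 | w_i = 0) and p_i^{10} = P(w_{i+1} = 0 | w_i = 1). If ∑_{i=1}^∞ p_i^{01} = ∞ and ∑_{i=1}^∞ p_i^{10} < ∞, then w_i converges to 1 almost surely. -/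
/-!
Once the chain is in state `1` it leaves it at time `n` with probability `p10 n`; these
probabilities are summable, so by the first Borel–Cantelli lemma almost surely only finitely many
`1 → 0` transitions occur. On the other hand, by the Markov property the probability of staying in
`0` throughout `[m, m + j]` is at most `∏ (1 - p01 k) ≤ exp (-∑ p01 k)`, which tends to `0`, so
almost surely the chain visits `1` infinitely often. A sequence that is infinitely often `1` and
eventually never drops from `1` to `0` is eventually `1`.
-/

open MeasureTheory Filter ProbabilityTheory Finset

lemma eventually_of_frequently_of_eventually_imp_succ {P : ℕ → Prop}
    (hfreq : ∃ᶠ n in atTop, P n) (hstep : ∀ᶠ n in atTop, P n → P (n + 1)) :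
    ∀ᶠ n in atTop, P n := by
  obtain ⟨N, hN⟩ := eventually_atTop.1 hstep
  obtain ⟨n, hNn, hn⟩ := frequently_atTop.1 hfreq N
  refine eventually_atTop.2 ⟨n, fun k hk => ?_⟩
  induction k, hk using Nat.le_induction with
  | base => exact hn
  | succ k hnk ih => exact hN k (hNn.trans hnk) ih

def IsTwoStateMarkovChain {Ω : Type*} [MeasurableSpace Ω] (μ : Measure Ω)
    (w : ℕ → Ω → Bool) (p01 p10 : ℕ → ℝ) : Prop :=
  ∀ (n : ℕ) (v : ℕ → Bool),
    0 < μ {ω | ∀ k ≤ n, w k ω = v k} →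
    (ProbabilityTheory.cond μ {ω | ∀ k ≤ n, w k ω = v k} {ω | w (n + 1) ω = true}).toReal
      = if v n = true then 1 - p10 n else p01 n

def history {Ω : Type*} (w : ℕ → Ω → Bool) (n : ℕ) (ω : Ω) : Fin (n + 1) → Bool :=
  fun k => w k ω

def staysFalse {Ω : Type*} (w : ℕ → Ω → Bool) (m n : ℕ) : Set Ω :=
  {ω | ∀ k ∈ Set.Icc m n, w k ω = false}

section History

variable {Ω : Type*} {w : ℕ → Ω → Bool}

lemma preimage_history_singleton_comp_val (n : ℕ) (v : ℕ → Bool) :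
    history w n ⁻¹' {v ∘ Fin.val} = {ω | ∀ k ≤ n, w k ω = v k} := by
  ext ω
  simp [history, funext_iff, Fin.forall_iff]

variable [MeasurableSpace Ω]

lemma measurable_history (hw : ∀ n, Measurable (w n)) (n : ℕ) : Measurable (history w n) :=
  measurable_pi_lambda _ fun k => hw k

lemma measurableSet_preimage_history (hw : ∀ n, Measurable (w n)) (n : ℕ)
    (s : Set (Fin (n + 1) → Bool)) : MeasurableSet (history w n ⁻¹' s) :=
  measurable_history hw n s.toFinite.measurableSet

end History

namespace IsTwoStateMarkovChain

variable {Ω : Type*} [MeasurableSpace Ω] {μ : Measure Ω} {w : ℕ → Ω → Bool}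
  {p01 p10 : ℕ → ℝ}

section FiniteMeasure

variable [IsFiniteMeasure μ]

lemma measure_preimage_history_inter_false (h : IsTwoStateMarkovChain μ w p01 p10)
    (hw : ∀ n, Measurable (w n)) (n : ℕ) (u : Fin (n + 1) → Bool) :
    μ (history w n ⁻¹' {u} ∩ {ω | w (n + 1) ω = false})
      = μ (history w n ⁻¹' {u}) * ENNReal.ofReal (if u (Fin.last n) then p10 n else 1 - p01 n) := by
  obtain ⟨v, rfl⟩ := Fin.val_injective.surjective_comp_right u
  have hA := measurableSet_preimage_history hw n {v ∘ Fin.val}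
  rw [preimage_history_singleton_comp_val] at hA ⊢
  rcases eq_or_ne (μ {ω | ∀ k ≤ n, w k ω = v k}) 0 with h0 | h0
  · simp [h0, measure_inter_null_of_null_left]
  have := cond_isProbabilityMeasure h0
  have hT : MeasurableSet {ω | w (n + 1) ω = true} := hw (n + 1) (measurableSet_singleton true)
  have hF : {ω | w (n + 1) ω = false} = {ω | w (n + 1) ω = true}ᶜ := by ext; simp
  rw [← cond_mul_eq_inter hA, ← ENNReal.ofReal_toReal (measure_ne_top _ _), hF, ← measureReal_def,
    probReal_compl_eq_one_sub hT, measureReal_def, h n v (pos_iff_ne_zero.2 h0), mul_comm]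
  split_ifs <;> simp_all

lemma measure_preimage_history_inter_false_of_last_eq (h : IsTwoStateMarkovChain μ w p01 p10)
    (hw : ∀ n, Measurable (w n)) (n : ℕ) (s : Finset (Fin (n + 1) → Bool)) (b : Bool)
    (hs : ∀ u ∈ s, u (Fin.last n) = b) :
    μ (history w n ⁻¹' s ∩ {ω | w (n + 1) ω = false})
      = μ (history w n ⁻¹' s) * ENNReal.ofReal (if b then p10 n else 1 - p01 n) := by
  have hmeas := measurableSet_preimage_history hw n
  calc μ (history w n ⁻¹' s ∩ {ω | w (n + 1) ω = false})
      = ∑ u ∈ s, μ (history w n ⁻¹' {u} ∩ {ω | w (n + 1) ω = false}) := by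
        simp_rw [← Measure.restrict_apply (hmeas _)]
        exact (sum_measure_preimage_singleton s fun u _ => hmeas _).symm
    _ = ∑ u ∈ s, μ (history w n ⁻¹' {u}) * ENNReal.ofReal (if b then p10 n else 1 - p01 n) :=
        sum_congr rfl fun u hu => by rw [h.measure_preimage_history_inter_false hw, hs u hu]
    _ = μ (history w n ⁻¹' s) * ENNReal.ofReal (if b then p10 n else 1 - p01 n) := by
        rw [← sum_mul, sum_measure_preimage_singleton s fun u _ => hmeas _]

lemma measure_staysFalse_succ (h : IsTwoStateMarkovChain μ w p01 p10)
    (hw : ∀ n, Measurable (w n)) {m n : ℕ} (hmn : m ≤ n) :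
    μ (staysFalse w m (n + 1)) = μ (staysFalse w m n) * ENNReal.ofReal (1 - p01 n) := by
  have hsucc : staysFalse w m (n + 1) = staysFalse w m n ∩ {ω | w (n + 1) ω = false} := by
    ext ω
    simp only [staysFalse, Set.mem_Icc, Set.mem_inter_iff, Set.mem_ofPred_eq]
    refine ⟨fun hω => ⟨fun k hk => hω k ⟨hk.1, by omega⟩, hω _ ⟨by omega, le_rfl⟩⟩, ?_⟩
    rintro ⟨hω, hlast⟩ k ⟨hmk, hkn⟩
    rcases Nat.lt_or_ge k (n + 1) with hk | hk
    · exact hω k ⟨hmk, by omega⟩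
    · rwa [show k = n + 1 by omega]
  have hpast : staysFalse w m n = history w n ⁻¹'
      ↑(univ.filter fun u : Fin (n + 1) → Bool => ∀ k : Fin (n + 1), m ≤ k → u k = false) := by
    ext ω
    simpa [staysFalse, history, Fin.forall_iff] using forall_congr' fun k => Imp.swap
  rw [hsucc, hpast, h.measure_preimage_history_inter_false_of_last_eq hw n _ false fun u hu => by
      simp only [mem_filter] at hu
      exact hu.2 (Fin.last n) (by simpa using hmn),
    if_neg Bool.false_ne_true]

end FiniteMeasure

variable [IsProbabilityMeasure μ]

lemma measure_true_inter_next_false_le (h : IsTwoStateMarkovChain μ w p01 p10)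
    (hw : ∀ n, Measurable (w n)) (n : ℕ) :
    μ ({ω | w n ω = true} ∩ {ω | w (n + 1) ω = false}) ≤ ENNReal.ofReal (p10 n) := by
  have hlast : {ω | w n ω = true}
      = history w n ⁻¹' ↑(univ.filter fun u : Fin (n + 1) → Bool => u (Fin.last n) = true) := by
    ext ω
    simp [history]
  rw [hlast, h.measure_preimage_history_inter_false_of_last_eq hw n _ true (by simp), if_pos rfl]
  exact mul_le_of_le_one_left zero_le prob_le_one

lemma measure_staysFalse_le (h : IsTwoStateMarkovChain μ w p01 p10)
    (hw : ∀ n, Measurable (w n)) (m j : ℕ) :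
    μ (staysFalse w m (m + j)) ≤ ENNReal.ofReal (Real.exp (-∑ i ∈ range j, p01 (m + i))) := by
  induction j with
  | zero => simpa using prob_le_one
  | succ j ih =>
    rw [← add_assoc, h.measure_staysFalse_succ hw (Nat.le_add_right m j), sum_range_succ,
      neg_add, Real.exp_add, ENNReal.ofReal_mul (Real.exp_nonneg _)]
    exact mul_le_mul' ih (ENNReal.ofReal_le_ofReal (Real.one_sub_le_exp_neg _))

lemma measure_forall_ge_false_eq_zero (h : IsTwoStateMarkovChain μ w p01 p10)
    (hw : ∀ n, Measurable (w n)) (hp01 : ∀ n, 0 ≤ p01 n) (hdiv : ¬ Summable p01) (m : ℕ) :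
    μ {ω | ∀ k, m ≤ k → w k ω = false} = 0 := by
  have hsum : Tendsto (fun j => ∑ i ∈ range j, p01 (m + i)) atTop atTop := by
    refine (not_summable_iff_tendsto_nat_atTop_of_nonneg fun i => hp01 _).1 ?_
    simpa [add_comm m] using (summable_nat_add_iff m).not.2 hdiv
  have hlim : Tendsto (fun j => ENNReal.ofReal (Real.exp (-∑ i ∈ range j, p01 (m + i))))
      atTop (nhds 0) := by
    simpa using ENNReal.tendsto_ofReal
      (Real.tendsto_exp_atBot.comp (tendsto_neg_atTop_atBot.comp hsum))
  have hsub j : {ω | ∀ k, m ≤ k → w k ω = false} ⊆ staysFalse w m (m + j) :=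
    fun ω hω k hk => hω k hk.1
  exact le_antisymm (ge_of_tendsto' hlim fun j =>
    (measure_mono (hsub j)).trans (h.measure_staysFalse_le hw m j)) zero_le

lemma ae_frequently_true (h : IsTwoStateMarkovChain μ w p01 p10)
    (hw : ∀ n, Measurable (w n)) (hp01 : ∀ n, 0 ≤ p01 n) (hdiv : ¬ Summable p01) :
    ∀ᵐ ω ∂μ, ∃ᶠ n in atTop, w n ω = true := by
  have hnull m := measure_eq_zero_iff_ae_notMem.1
    (h.measure_forall_ge_false_eq_zero hw hp01 hdiv m)
  filter_upwards [ae_all_iff.2 hnull] with ω hω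
  simpa [frequently_atTop] using hω

lemma ae_eventually_true_imp_succ (h : IsTwoStateMarkovChain μ w p01 p10)
    (hw : ∀ n, Measurable (w n)) (hconv : Summable p10) :
    ∀ᵐ ω ∂μ, ∀ᶠ n in atTop, w n ω = true → w (n + 1) ω = true := by
  have hdrops : ∑' n, μ ({ω | w n ω = true} ∩ {ω | w (n + 1) ω = false}) ≠ ⊤ :=
    ne_top_of_le_ne_top hconv.tsum_ofReal_ne_top
      (ENNReal.tsum_le_tsum (h.measure_true_inter_next_false_le hw))
  filter_upwards [ae_eventually_notMem hdrops] with ω hω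
  filter_upwards [hω] with n hn
  simpa using hn

end IsTwoStateMarkovChain

theorem stmt_14_general {Ω : Type*} [MeasurableSpace Ω] (μ : Measure Ω) [IsProbabilityMeasure μ]
    (w : ℕ → Ω → Bool) (hw : ∀ n, Measurable (w n))
    (p01 p10 : ℕ → ℝ)
    (hp01 : ∀ n, p01 n ∈ Set.Icc (0 : ℝ) 1)
    -- Markov chain with the given transition probabilities
    (hmarkov : ∀ (n : ℕ) (v : ℕ → Bool),
      0 < μ {ω | ∀ k ≤ n, w k ω = v k} →
      (ProbabilityTheory.cond μ {ω | ∀ k ≤ n, w k ω = v k} {ω | w (n + 1) ω = true}).toReal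
        = if v n = true then 1 - p10 n else p01 n)
    (hdiv : ¬ Summable p01) (hconv : Summable p10) :
    ∀ᵐ ω ∂μ, ∀ᶠ n in atTop, w n ω = true := by
  have hchain : IsTwoStateMarkovChain μ w p01 p10 := hmarkov
  filter_upwards [hchain.ae_frequently_true hw (fun n => (hp01 n).1) hdiv,
    hchain.ae_eventually_true_imp_succ hw hconv] with ω hfreq hstep
  exact eventually_of_frequently_of_eventually_imp_succ hfreq hstep

/-- For a `{0,1}`-valued time-inhomogeneous Markov chain started at `0`, if the transition
probabilities satisfy `∑ p_i^{01} = ∞` and `∑ p_i^{10} < ∞`, then `w_i → 1` almost surely. -/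
theorem stmt_14 {Ω : Type*} [MeasurableSpace Ω] (μ : Measure Ω) [IsProbabilityMeasure μ]
    (w : ℕ → Ω → Bool) (hw : ∀ n, Measurable (w n))
    (hw0 : ∀ᵐ ω ∂μ, w 0 ω = false)
    (p01 p10 : ℕ → ℝ)
    (hp01 : ∀ n, p01 n ∈ Set.Icc (0 : ℝ) 1) (hp10 : ∀ n, p10 n ∈ Set.Icc (0 : ℝ) 1)
    -- Markov chain with the given transition probabilities
    (hmarkov : ∀ (n : ℕ) (v : ℕ → Bool),
      0 < μ {ω | ∀ k ≤ n, w k ω = v k} →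
      (ProbabilityTheory.cond μ {ω | ∀ k ≤ n, w k ω = v k} {ω | w (n + 1) ω = true}).toReal
        = if v n = true then 1 - p10 n else p01 n)
    (hdiv : ¬ Summable p01) (hconv : Summable p10) :
    ∀ᵐ ω ∂μ, ∀ᶠ n in atTop, w n ω = true :=
  stmt_14_general μ w hw p01 p10 hp01 hmarkov hdiv hconv
end

section
/- Let 0 < q₁ < q̄ < q₀ < 1 with q̄ = (q₀+q₁)/2, and for large m define r_m = ⌈log_{1/q̄}(log m)⌉. Then ∑_m q₁^{r_m}/m < ∞ while ∑_m q₀^{r_m}/m = ∞. -/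
open Real

lemma aux_summable_iff (qbar q : ℝ) (hb0 : 0 < qbar) (hb1 : qbar < 1) (hq0 : 0 < q) (hq1 : q < 1)
    (r : ℕ → ℕ)
    (hr : ∀ m : ℕ, 1 / qbar < Real.log m → (r m : ℤ) = ⌈Real.logb (1 / qbar) (Real.log m)⌉)
    (hr' : ∀ m : ℕ, ¬ (1 / qbar < Real.log m) → r m = 1) :
    Summable (fun m : ℕ => q ^ r m / m) ↔
      Summable (fun k : ℕ => (k : ℝ) ^ (Real.log q / Real.log (1 / qbar))) := by
  have hb : (1 : ℝ) < 1 / qbar := by rw [lt_div_iff₀ hb0]; linarith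
  set b : ℝ := 1 / qbar with hbdef
  set e : ℝ := Real.log q / Real.log b with hedef
  have hlogb : 0 < Real.log b := Real.log_pos hb
  -- monotonicity of r
  have rmono : ∀ m n : ℕ, 0 < m → m ≤ n → r m ≤ r n := by
    intro m n hm hmn
    by_cases h : 1 / qbar < Real.log m
    · have hlog : Real.log m ≤ Real.log n :=
        Real.log_le_log (by exact_mod_cast hm) (by exact_mod_cast hmn)
      have hn : 1 / qbar < Real.log n := lt_of_lt_of_le h hlog
      have : (r m : ℤ) ≤ (r n : ℤ) := by
        rw [hr m h, hr n hn]
        exact Int.ceil_le_ceil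
          (Real.logb_le_logb_of_le hb (lt_trans (by positivity) h) hlog)
      exact_mod_cast this
    · rw [hr' m h]
      by_cases h2 : 1 / qbar < Real.log n
      · have hpos : (0 : ℤ) < (r n : ℤ) := by
          rw [hr n h2, Int.ceil_pos]
          exact Real.logb_pos hb (lt_trans hb h2)
        omega
      · rw [hr' n h2]
  have hnonneg : ∀ n : ℕ, 0 ≤ q ^ r n / n :=
    fun n => div_nonneg (pow_nonneg hq0.le _) (Nat.cast_nonneg n)
  have hanti : ∀ ⦃m n : ℕ⦄, 0 < m → m ≤ n → q ^ r n / n ≤ q ^ r m / m := by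
    intro m n hm hmn
    apply div_le_div₀ (pow_nonneg hq0.le _)
      (pow_le_pow_of_le_one hq0.le hq1.le (rmono m n hm hmn))
      (by exact_mod_cast hm) (by exact_mod_cast hmn)
  have hcond := summable_condensed_iff_of_nonneg hnonneg hanti
  have hg : (fun k : ℕ => (2 : ℝ) ^ k * (q ^ r (2 ^ k) / ((2 ^ k : ℕ) : ℝ)))
      = fun k : ℕ => q ^ r (2 ^ k) := by
    funext k
    have h2k : ((2 ^ k : ℕ) : ℝ) = (2 : ℝ) ^ k := by push_cast; ring
    rw [h2k]
    field_simp
  rw [hg] at hcond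
  rw [← hcond]
  -- now compare the condensed series with the p-series
  set K : ℕ := ⌈b / Real.log 2⌉₊ + 1 with hKdef
  have hlog2 : (0 : ℝ) < Real.log 2 := Real.log_pos one_lt_two
  have hK : ∀ k : ℕ, K ≤ k → b < (k : ℝ) * Real.log 2 := by
    intro k hk
    have h1 : b / Real.log 2 < (k : ℝ) := by
      calc b / Real.log 2 ≤ (⌈b / Real.log 2⌉₊ : ℝ) := Nat.le_ceil _
        _ < (K : ℝ) := by exact_mod_cast Nat.lt_succ_self _
        _ ≤ (k : ℝ) := by exact_mod_cast hk
    rwa [div_lt_iff₀ hlog2] at h1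
  have hlogm : ∀ k : ℕ, Real.log ((2 ^ k : ℕ) : ℝ) = (k : ℝ) * Real.log 2 := by
    intro k
    have h2k : ((2 ^ k : ℕ) : ℝ) = (2 : ℝ) ^ k := by push_cast; ring
    rw [h2k, Real.log_pow]
  -- key sandwich bounds for k ≥ K
  have key : ∀ k : ℕ, K ≤ k →
      q ^ r (2 ^ k) ≤ ((k : ℝ) * Real.log 2) ^ e ∧
      q * ((k : ℝ) * Real.log 2) ^ e ≤ q ^ r (2 ^ k) := by
    intro k hk
    set t : ℝ := (k : ℝ) * Real.log 2 with htdef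
    have htb : b < t := hK k hk
    have ht0 : 0 < t := lt_trans (by linarith) htb
    have hcond' : 1 / qbar < Real.log ((2 ^ k : ℕ) : ℝ) := by rw [hlogm k]; exact htb
    have hrk : (r (2 ^ k) : ℤ) = ⌈Real.logb b t⌉ := by
      have := hr (2 ^ k) hcond'
      rwa [hlogm k] at this
    set L : ℝ := Real.logb b t with hLdef
    have hcast : ((r (2 ^ k) : ℕ) : ℝ) = ((⌈L⌉ : ℤ) : ℝ) := by exact_mod_cast hrk
    have h1 : L ≤ ((r (2 ^ k) : ℕ) : ℝ) := by rw [hcast]; exact Int.le_ceil L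
    have h2 : ((r (2 ^ k) : ℕ) : ℝ) ≤ L + 1 := by
      rw [hcast]; exact (Int.ceil_lt_add_one L).le
    have hid : q ^ L = t ^ e := by
      rw [Real.rpow_def_of_pos hq0, Real.rpow_def_of_pos ht0, hLdef, Real.logb, hedef]
      congr 1
      ring
    have hpow : q ^ r (2 ^ k) = q ^ ((r (2 ^ k) : ℕ) : ℝ) := (Real.rpow_natCast q _).symm
    constructor
    · rw [hpow, ← hid]
      exact Real.rpow_le_rpow_of_exponent_ge hq0 hq1.le h1
    · rw [hpow]
      calc q * t ^ e = q ^ (L + 1) := by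
            rw [Real.rpow_add hq0, Real.rpow_one, hid]; ring
        _ ≤ q ^ ((r (2 ^ k) : ℕ) : ℝ) :=
            Real.rpow_le_rpow_of_exponent_ge hq0 hq1.le h2
  have hmulr : ∀ k : ℕ, ((k : ℝ) * Real.log 2) ^ e = (k : ℝ) ^ e * (Real.log 2) ^ e :=
    fun k => Real.mul_rpow (Nat.cast_nonneg k) hlog2.le
  have hd0 : (0 : ℝ) < (Real.log 2) ^ e := Real.rpow_pos_of_pos hlog2 e
  constructor
  · -- condensed summable → p-series summable
    intro hgsum
    rw [← summable_nat_add_iff K]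
    have hsum2 : Summable (fun n : ℕ => (q * (Real.log 2) ^ e)⁻¹ * q ^ r (2 ^ (n + K))) :=
      ((summable_nat_add_iff K).2 hgsum).mul_left _
    apply Summable.of_nonneg_of_le (fun n => Real.rpow_nonneg (Nat.cast_nonneg _) e) _ hsum2
    intro n
    have hc : (0 : ℝ) < q * (Real.log 2) ^ e := by positivity
    rw [le_inv_mul_iff₀ hc]
    have := (key (n + K) (Nat.le_add_left K n)).2
    calc q * (Real.log 2) ^ e * ((n + K : ℕ) : ℝ) ^ e
        = q * (((n + K : ℕ) : ℝ) * Real.log 2) ^ e := by rw [hmulr]; ring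
      _ ≤ q ^ r (2 ^ (n + K)) := this
  · -- p-series summable → condensed summable
    intro hpsum
    rw [← summable_nat_add_iff K]
    have hsum2 : Summable (fun n : ℕ => (Real.log 2) ^ e * ((n + K : ℕ) : ℝ) ^ e) :=
      ((summable_nat_add_iff K).2 hpsum).mul_left _
    apply Summable.of_nonneg_of_le (fun n => pow_nonneg hq0.le _) _ hsum2
    intro n
    have := (key (n + K) (Nat.le_add_left K n)).1
    calc q ^ r (2 ^ (n + K)) ≤ (((n + K : ℕ) : ℝ) * Real.log 2) ^ e := this
      _ = (Real.log 2) ^ e * ((n + K : ℕ) : ℝ) ^ e := by rw [hmulr]; ring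


/-- With `0 < q₁ < q̄ < q₀ < 1`, `q̄ = (q₀+q₁)/2`, and `r_m = ⌈log_{1/q̄}(log m)⌉` for large `m`
(`r_m = 1` for small `m`), the series `∑ q₁^{r_m}/m` converges while `∑ q₀^{r_m}/m` diverges. -/
theorem stmt_15 (q₀ q₁ qbar : ℝ) (h1 : 0 < q₁) (h10 : q₁ < q₀) (h0 : q₀ < 1)
    (hbar : qbar = (q₀ + q₁) / 2)
    (r : ℕ → ℕ)
    (hr : ∀ m : ℕ, 1 / qbar < Real.log m → (r m : ℤ) = ⌈Real.logb (1 / qbar) (Real.log m)⌉)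
    (hr' : ∀ m : ℕ, ¬ (1 / qbar < Real.log m) → r m = 1) :
    Summable (fun m : ℕ => q₁ ^ r m / m) ∧ ¬ Summable (fun m : ℕ => q₀ ^ r m / m) := by
  have hb0 : 0 < qbar := by rw [hbar]; linarith
  have hb1 : qbar < 1 := by rw [hbar]; linarith
  have h1b : q₁ < qbar := by rw [hbar]; linarith
  have hb0' : qbar < q₀ := by rw [hbar]; linarith
  have hlogbar : Real.log qbar < 0 := Real.log_neg hb0 hb1
  have hloginv : Real.log (1 / qbar) = -Real.log qbar := by
    rw [one_div, Real.log_inv]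
  have h1' : Summable (fun m : ℕ => q₁ ^ r m / m) := by
    rw [aux_summable_iff qbar q₁ hb0 hb1 h1 (lt_trans h1b hb1) r hr hr']
    rw [Real.summable_nat_rpow]
    rw [hloginv, div_lt_iff₀ (by linarith)]
    have : Real.log q₁ < Real.log qbar := Real.log_lt_log h1 h1b
    linarith
  refine ⟨h1', ?_⟩
  rw [aux_summable_iff qbar q₀ hb0 hb1 (by linarith) h0 r hr hr']
  rw [Real.summable_nat_rpow]
  rw [hloginv, div_lt_iff₀ (by linarith)]
  have : Real.log qbar < Real.log q₀ := Real.log_lt_log hb0 hb0'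
  push_neg
  linarith
end
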